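/- arXiv:1701.02118 — 3 statements merged into one kernel-verified Lean document; each statement's English description precedes it below -/
import Mathlib

section
/- For the incremental order-decomposition of a sequence of labelled symbols: if l < l', then Decomp_{l'}(s) is a prefix of Decomp_l(s). -/
variable {Γ : Type*}

/-- Helper computing the incremental order-decomposition on the reversed sequence
(rightmost element first): select the first element of order `> l`, then continue
with the threshold raised to its order. -/
def decompRev (ordf : Γ → ℕ) : ℕ → List Γ → List Γ
  | _, [] => []
  | l, a :: rest =>
      if l < ordf a then a :: decompRev ordf (ordf a) rest else decompRev ordf l rest

/-- The incremental order-decomposition `Decomp_l(s)` of a finite sequence `s` over `Γ`: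
`Decomp_l ε = ε`; if `s` has no element of order `> l` then `Decomp_l s = ε`; otherwise,
letting `b` be the last element of `s` with `ord b > l`,
`Decomp_l s = Decomp_{ord b}(s_{<b}) · b` where `s_{<b}` is the strict prefix before
that occurrence. The result is listed left-to-right, ending with `b`. -/
def Decomp (ordf : Γ → ℕ) (l : ℕ) (s : List Γ) : List Γ :=
  (decompRev ordf l s.reverse).reverse

/- Reading the sequence from the right, a higher threshold only skips elements that the lower
one may select; as soon as both select the same element, they continue with the same threshold. -/
theorem decompRev_suffix_of_le (ordf : Γ → ℕ) (t : List Γ) {l l' : ℕ} (h : l ≤ l') :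
    decompRev ordf l' t <:+ decompRev ordf l t := by
  induction t generalizing l l' with
  | nil => exact List.suffix_refl []
  | cons a rest ih =>
    simp only [decompRev]
    split_ifs with hl' hl
    · exact List.suffix_refl _
    · exact absurd (h.trans_lt hl') hl
    · exact (ih (not_lt.mp hl')).trans (List.suffix_cons a _)
    · exact ih h

/-- If `l < l'` then `Decomp_{l'}(s)` is a (sequence-)prefix of `Decomp_l(s)`. -/
theorem Decomp_prefix_of_lt (ordf : Γ → ℕ) (s : List Γ) {l l' : ℕ} (h : l < l') :
    Decomp ordf l' s <+: Decomp ordf l s :=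
  (decompRev_suffix_of_le ordf s.reverse h.le).reverse
end

section
/- Let s be a sequence over Γ and a an element with ord(a) > l. If Decomp_l(s) = ⟨a_r, ..., a_1⟩, then Decomp_l(s · a) = ⟨a⟩ if ord(a) ≥ ord(a_r) (or r = 0); otherwise Decomp_l(s · a) = ⟨a_r, ..., a_i, a⟩ where i is the least index in {1,...,r} with ord(a) < ord(a_i). -/
variable {Γ : Type*}

/-!
Reading the sequence from the right, `Decomp_l` greedily picks the elements that beat the
current record, so it is strictly decreasing in order (from left to right), and raising the
threshold from `l` to `m ≥ l` only discards the entries of order `≤ m`: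
`Decomp_m(s)` is the longest prefix of `Decomp_l(s)` of elements of order `> m`.
Since `a` is the last element of `s · a` and `ord a > l`, `Decomp_l(s · a) = Decomp_{ord a}(s) · a`,
which is that prefix for `m = ord a`, followed by `a`.
-/

namespace List

theorem filter_eq_takeWhile_of_pairwise {α : Type*} {p : α → Bool} {l : List α}
    (hl : l.Pairwise fun x y => p y → p x) : l.filter p = l.takeWhile p := by
  induction l with
  | nil => rfl
  | cons x xs ih =>
    rw [pairwise_cons] at hl
    by_cases hx : p x
    · rw [filter_cons_of_pos hx, takeWhile_cons_of_pos hx, ih hl.2]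
    · rw [filter_cons_of_neg hx, takeWhile_cons_of_neg hx, filter_eq_nil_iff]
      exact fun y hy hpy => hx (hl.1 y hy hpy)

end List

section

variable (ordf : Γ → ℕ)

theorem lt_of_mem_decompRev {l : ℕ} {t : List Γ} {c : Γ} (hc : c ∈ decompRev ordf l t) :
    l < ordf c := by
  induction t generalizing l with
  | nil => simp [decompRev] at hc
  | cons b t ih =>
    by_cases hlb : l < ordf b
    · rw [decompRev, if_pos hlb, List.mem_cons] at hc
      rcases hc with rfl | hc
      · exact hlb
      · exact hlb.trans (ih hc)
    · rw [decompRev, if_neg hlb] at hc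
      exact ih hc

theorem pairwise_decompRev (l : ℕ) (t : List Γ) :
    (decompRev ordf l t).Pairwise fun x y => ordf x < ordf y := by
  induction t generalizing l with
  | nil => exact List.Pairwise.nil
  | cons b t ih =>
    by_cases hlb : l < ordf b
    · rw [decompRev, if_pos hlb, List.pairwise_cons]
      exact ⟨fun c hc => lt_of_mem_decompRev ordf hc, ih _⟩
    · rw [decompRev, if_neg hlb]
      exact ih _

theorem decompRev_eq_filter {l m : ℕ} (hlm : l ≤ m) (t : List Γ) :
    decompRev ordf m t = (decompRev ordf l t).filter fun c => m < ordf c := by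
  induction t generalizing l with
  | nil => rfl
  | cons b t ih =>
    by_cases hlb : l < ordf b
    · by_cases hmb : m < ordf b
      · simp only [decompRev, if_pos hlb, if_pos hmb]
        rw [List.filter_cons_of_pos (by simpa using hmb), List.cons_inj_right, eq_comm,
          List.filter_eq_self]
        exact fun c hc => by simpa using hmb.trans (lt_of_mem_decompRev ordf hc)
      · simp only [decompRev, if_pos hlb, if_neg hmb, List.filter_cons, decide_eq_true_eq]
        exact ih (Nat.le_of_not_lt hmb)
    · have hmb : ¬ m < ordf b := by omega
      simp only [decompRev, if_neg hlb, if_neg hmb]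
      exact ih hlm

theorem pairwise_Decomp (l : ℕ) (s : List Γ) :
    (Decomp ordf l s).Pairwise fun x y => ordf y < ordf x :=
  List.pairwise_reverse.mpr (pairwise_decompRev ordf l s.reverse)

theorem Decomp_eq_takeWhile {l m : ℕ} (hlm : l ≤ m) (s : List Γ) :
    Decomp ordf m s = (Decomp ordf l s).takeWhile fun c => m < ordf c := by
  rw [← List.filter_eq_takeWhile_of_pairwise]
  · rw [Decomp, Decomp, decompRev_eq_filter ordf hlm, List.filter_reverse]
  · refine (pairwise_Decomp ordf l s).imp fun hyx hy => ?_
    simp only [decide_eq_true_eq] at hy ⊢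
    omega

theorem Decomp_append_of_lt {l : ℕ} {a : Γ} (h : l < ordf a) (s : List Γ) :
    Decomp ordf l (s ++ [a]) = Decomp ordf (ordf a) s ++ [a] := by
  simp [Decomp, decompRev, h]

end

/-- Appending an element `a` with `ord a > l`: if `Decomp_l(s) = ⟨a_r, ..., a_1⟩`
(with `a_r` first/leftmost), then `Decomp_l(s · a) = ⟨a⟩` when `r = 0` or
`ord a ≥ ord a_r`; otherwise `Decomp_l(s · a) = ⟨a_r, ..., a_i, a⟩` where `i` is the
least index in `{1,...,r}` with `ord a < ord a_i` — since the orders in the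
decomposition are strictly increasing from right to left, `⟨a_r, ..., a_i⟩` is
exactly the longest prefix of `⟨a_r, ..., a_1⟩` consisting of elements of order
greater than `ord a`. -/
theorem Decomp_append_high (ordf : Γ → ℕ) (s : List Γ) (l : ℕ) (a : Γ) (h : l < ordf a) :
    ((Decomp ordf l s = [] ∨
        ∀ b, (Decomp ordf l s).head? = some b → ordf b ≤ ordf a) →
      Decomp ordf l (s ++ [a]) = [a]) ∧
    (∀ b, (Decomp ordf l s).head? = some b → ordf a < ordf b →
      Decomp ordf l (s ++ [a]) =
        (Decomp ordf l s).takeWhile (fun c => ordf a < ordf c) ++ [a]) := by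
  have happend : Decomp ordf l (s ++ [a]) =
      (Decomp ordf l s).takeWhile (fun c => ordf a < ordf c) ++ [a] := by
    rw [Decomp_append_of_lt ordf h, Decomp_eq_takeWhile ordf h.le]
  refine ⟨fun hsmall => ?_, fun _ _ _ => happend⟩
  rw [happend]
  rcases hD : Decomp ordf l s with _ | ⟨b, t⟩
  · rfl
  · have hb : ordf b ≤ ordf a := by
      rcases hsmall with hnil | hhead
      · exact absurd (hD ▸ hnil) (List.cons_ne_nil b t)
      · exact hhead b (by rw [hD]; rfl)
    rw [List.takeWhile_cons_of_neg (by simpa using hb), List.nil_append]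
end

section
/- Monotone safety in the order parameter: if a higher-order stack s with links is l-safe and l ≤ k ≤ n, then s is k-safe. -/
/-- An annotated symbol: a stack symbol together with its link `(j, h)`
(link order `j`, link height `h`). -/
abbrev Ann (Γ : Type) := Γ × ℕ × ℕ

/-- Higher-order stacks with links: an order-0 stack is an annotated symbol, and an
order-(m+1) stack is a (finite) sequence of order-m stacks, the top at the end.
An order-1 stack is thus a sequence of annotated symbols. -/
def Stk (Γ : Type) : ℕ → Type
  | 0 => Ann Γ
  | m + 1 => List (Stk Γ m)

variable {Γ : Type}

/-- Apply `f` to the last (top) element of a list, if any. -/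
def modLast {α : Type} (f : α → α) : List α → List α
  | [] => []
  | [a] => [f a]
  | a :: b :: r => a :: modLast f (b :: r)

/-- The top order-1 stack of a higher-order stack. -/
def top1 : ∀ {m : ℕ}, Stk Γ (m + 1) → Stk Γ 1
  | 0, s => s
  | m + 1, s => top1 (List.getLastD s ([] : Stk Γ (m + 1)))

/-- `pref1 i s`: the prefix of `s` at the `i`-th symbol (0-based) of its top order-1
stack, i.e. `s` with everything above that occurrence removed. -/
def pref1 : ∀ {m : ℕ}, ℕ → Stk Γ (m + 1) → Stk Γ (m + 1)
  | 0, i, s => List.take (i + 1) s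
  | _ + 1, i, s => modLast (pref1 i) s

/-- `popj j s`: the operation `pop_j`, removing the top order-(j-1) stack
(for `1 ≤ j ≤` order of `s`; identity-like otherwise). -/
def popj : ∀ {m : ℕ}, ℕ → Stk Γ (m + 1) → Stk Γ (m + 1)
  | 0, _, s => List.dropLast s
  | m + 1, j, s => if j = m + 2 then List.dropLast s else modLast (popj j) s

/-- `collapse s = pop_j^h s` where `(j, h)` is the link of the top symbol of `s`. -/
def collapse {m : ℕ} (s : Stk Γ (m + 1)) : Stk Γ (m + 1) :=
  match List.getLast? (top1 s) with
  | some (_, j, h) => (popj j)^[h] s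
  | none => s

/-- `push1 x s`: push the annotated symbol `x` onto the top order-1 stack of `s`. -/
def push1 : ∀ {m : ℕ}, Ann Γ → Stk Γ (m + 1) → Stk Γ (m + 1)
  | 0, x, s => List.append s [x]
  | _ + 1, x, s => modLast (push1 x) s

/-- The link-renaming operation `(·)^⟨j⟩`: increment the height of every link of
order `j`, leaving other links unchanged. -/
def renameS (j : ℕ) : ∀ {m : ℕ}, Stk Γ m → Stk Γ m
  | 0, x => if x.2.1 = j then (x.1, j, x.2.2 + 1) else x
  | _ + 1, s => List.map (renameS j) s

/-- `pushj j s`: the operation `push_j`, duplicating the top order-(j-1) stack and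
applying `(·)^⟨j⟩` to the duplicated copy (for `2 ≤ j ≤` order of `s`). -/
def pushj : ∀ {m : ℕ}, ℕ → Stk Γ (m + 1) → Stk Γ (m + 1)
  | 0, _, s => s
  | m + 1, j, s =>
      if j = m + 2 then List.append s (((List.getLast? s).map (renameS j)).toList)
      else modLast (pushj j) s

/-- Helper for the incremental order-decomposition, working on the reversed,
position-annotated top order-1 stack: select the first lambda symbol of order `> l`,
then continue with the threshold raised to its order. -/
def decompRevD (ordf : Γ → ℕ) (isLam : Γ → Bool) :
    ℕ → List (ℕ × Ann Γ) → List (ℕ × Ann Γ)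
  | _, [] => []
  | l, p :: rest =>
      if isLam p.2.1 = true ∧ l < ordf p.2.1 then
        p :: decompRevD ordf isLam (ordf p.2.1) rest
      else decompRevD ordf isLam l rest

/-- The incremental order-decomposition `Decomp_l` of an order-1 stack, with each
selected symbol paired with its position: the last lambda symbol of order `> l`,
preceded by the decomposition of the strict prefix with respect to that order.
The result is listed left-to-right (the symbol of largest order first). -/
def DecompD (ordf : Γ → ℕ) (isLam : Γ → Bool) (l : ℕ) (t : Stk Γ 1) :
    List (ℕ × Ann Γ) :=
  (decompRevD ordf isLam l (List.map Prod.swap (List.zipIdx (t : List (Ann Γ)))).reverse).reverse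

/-- `l`-safety of a higher-order stack `s` (of order `m+1`), for the CPDA order `n`:
(1) every symbol in `Decomp_l` of the top order-1 stack of `s` has link height 1, and
(2) whenever `n - ord a_q + 1 ≤` order of `s` (so that the link of `a_q` is not
dangling), collapsing the prefix of `s` at `a_q` yields an `l`-safe stack if `a_q` is
the last element of the decomposition, and an `ord a_{q-1}`-safe stack if `a_{q-1}`
is its right neighbour in the decomposition. A stack is safe if it is 0-safe. -/
inductive LSafe (n : ℕ) (ordf : Γ → ℕ) (isLam : Γ → Bool) :
    ℕ → ∀ {m : ℕ}, Stk Γ (m + 1) → Prop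
  | intro (l : ℕ) {m : ℕ} (s : Stk Γ (m + 1))
      (hheights : ∀ p ∈ DecompD ordf isLam l (top1 s), p.2.2.2 = 1)
      (hlast : ∀ p, (DecompD ordf isLam l (top1 s)).getLast? = some p →
          n - ordf p.2.1 + 1 ≤ m + 1 →
          LSafe n ordf isLam l (collapse (pref1 p.1 s)))
      (hadj : ∀ i p p', (DecompD ordf isLam l (top1 s))[i]? = some p →
          (DecompD ordf isLam l (top1 s))[i + 1]? = some p' →
          n - ordf p.2.1 + 1 ≤ m + 1 →
          LSafe n ordf isLam (ordf p'.2.1) (collapse (pref1 p.1 s))) :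
      LSafe n ordf isLam l s

/-
Raising the threshold from `l` to `k` only discards the symbols of order `≤ k` at the right
end of the decomposition: `Decomp_k` is a prefix of `Decomp_l`, and the discarded symbols have
order `≤ k`. Link heights and the conditions on adjacent pairs are therefore inherited. For the
last symbol `a` of `Decomp_k`, either `a` is also last in `Decomp_l`, and its collapse is
`l`-safe, hence `k`-safe by induction; or its right neighbour `a'` in `Decomp_l` is discarded,
and its collapse is `ord a'`-safe with `ord a' ≤ k`, hence again `k`-safe by induction.
-/

theorem List.getElem?_append_of_getElem?_eq_some {α : Type*} {l₁ l₂ : List α} {i : ℕ} {a : α}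
    (h : l₁[i]? = some a) : (l₁ ++ l₂)[i]? = some a := by
  rwa [List.getElem?_append_left (List.getElem?_eq_some_iff.mp h).1]

theorem List.getElem?_append_cons_of_getLast?_eq_some {α : Type*} {l₁ l₂ : List α} {a b : α}
    (h : l₁.getLast? = some a) :
    (l₁ ++ b :: l₂)[l₁.length - 1]? = some a ∧ (l₁ ++ b :: l₂)[l₁.length - 1 + 1]? = some b := by
  have hpos : 0 < l₁.length := List.length_pos_iff.mpr (by rintro rfl; simp at h)
  rw [List.getLast?_eq_getElem?] at h
  refine ⟨List.getElem?_append_of_getElem?_eq_some h, ?_⟩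
  rw [Nat.sub_add_cancel hpos, List.getElem?_append_right le_rfl]
  simp

section

variable (ordf : Γ → ℕ) (isLam : Γ → Bool)

theorem decompRevD_eq_dropWhile (L : List (ℕ × Ann Γ)) {l k : ℕ} (hlk : l ≤ k) :
    decompRevD ordf isLam k L =
      (decompRevD ordf isLam l L).dropWhile (fun p => ordf p.2.1 ≤ k) := by
  induction L generalizing l k with
  | nil => simp [decompRevD]
  | cons p rest ih =>
    simp only [decompRevD]
    by_cases hlam : isLam p.2.1 = true
    · by_cases hk : k < ordf p.2.1
      · simp [hlam, hk, hlk.trans_lt hk]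
      · have hpk : ordf p.2.1 ≤ k := not_lt.mp hk
        by_cases hl : l < ordf p.2.1
        · simpa [hlam, hk, hl, hpk] using ih hpk
        · simpa [hlam, hk, hl] using ih hlk
    · simpa [hlam] using ih hlk

theorem DecompD_eq_append {l k : ℕ} (hlk : l ≤ k) (t : Stk Γ 1) :
    ∃ c, DecompD ordf isLam l t = DecompD ordf isLam k t ++ c ∧
      ∀ p ∈ c, ordf p.2.1 ≤ k := by
  let L := (List.map Prod.swap (List.zipIdx (t : List (Ann Γ)))).reverse
  refine ⟨((decompRevD ordf isLam l L).takeWhile (fun p => ordf p.2.1 ≤ k)).reverse, ?_,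
    fun p hp => ?_⟩
  · rw [DecompD, DecompD, decompRevD_eq_dropWhile ordf isLam L hlk, ← List.reverse_append,
      List.takeWhile_append_dropWhile]
  · simpa using List.mem_takeWhile_imp (List.mem_reverse.mp hp)

end

theorem LSafe.mono_general (n : ℕ) (ordf : Γ → ℕ) (isLam : Γ → Bool) {m : ℕ}
    (s : Stk Γ (m + 1)) {l k : ℕ} (hsafe : LSafe n ordf isLam l s)
    (hlk : l ≤ k) : LSafe n ordf isLam k s := by
  induction hsafe generalizing k with
  | intro l s hheights hlast hadj ih_last ih_adj =>
    obtain ⟨c, hD, hc⟩ := DecompD_eq_append ordf isLam hlk (top1 s)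
    refine LSafe.intro k s (fun p hp => hheights p (hD ▸ List.mem_append_left c hp)) ?_ ?_
    · intro p hp hcond
      cases c with
      | nil => exact ih_last p (by simpa [hD] using hp) hcond hlk
      | cons p' c =>
        obtain ⟨hi, hi'⟩ := List.getElem?_append_cons_of_getLast?_eq_some (l₂ := c) (b := p') hp
        exact ih_adj _ p p' (hD ▸ hi) (hD ▸ hi') hcond (hc p' List.mem_cons_self)
    · intro i p p' hp hp' hcond
      exact hadj i p p' (hD ▸ List.getElem?_append_of_getElem?_eq_some hp)
        (hD ▸ List.getElem?_append_of_getElem?_eq_some hp') hcond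

/-- Monotone safety in the order parameter: if a higher-order stack `s` with links is
`l`-safe and `l ≤ k ≤ n`, then `s` is `k`-safe. -/
theorem LSafe.mono (n : ℕ) (ordf : Γ → ℕ) (isLam : Γ → Bool) {m : ℕ}
    (s : Stk Γ (m + 1)) {l k : ℕ} (hsafe : LSafe n ordf isLam l s)
    (hlk : l ≤ k) (hkn : k ≤ n) : LSafe n ordf isLam k s :=
  LSafe.mono_general n ordf isLam s hsafe hlk
end
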